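/- There exists a constant C, depending only on ρ₀, such that for all integers m ≥ 0 and all ⌊m/2⌋ + 1 ≤ j ≤ m, (m!/(j!(m−j)!)) · (m+1)^{1/2} · N_{ρ,m+1}/(N_{ρ,j+1}·H_{ρ,m−j+3,1}) ≤ C·(j+1)^{1/2}/(m−j+1). -/

import Mathlib

open MeasureTheory Real Filter

noncomputable section

namespace HypP

/-- Japanese bracket `⟨y⟩ = (1+y²)^{1/2}`. -/
def br (y : ℝ) : ℝ := Real.sqrt (1 + y ^ 2)

/-- Weighting a function of `(x,y)` by `⟨y⟩^e`. -/
def wt (e : ℝ) (g : ℝ → ℝ → ℝ) : ℝ → ℝ → ℝ := fun x y => br y ^ e * g x y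

/-- `m`-th tangential derivative `∂ₓ^m`. -/
def Dx (m : ℕ) (g : ℝ → ℝ → ℝ) : ℝ → ℝ → ℝ :=
  fun x y => iteratedDeriv m (fun x' => g x' y) x

/-- `k`-th normal derivative `∂_y^k`. -/
def Dy (k : ℕ) (g : ℝ → ℝ → ℝ) : ℝ → ℝ → ℝ :=
  fun x y => iteratedDeriv k (fun y' => g x y') y

/-- Squared `L²` norm on the half-plane `ℝ × (0,∞)`. -/
def sqL2 (g : ℝ → ℝ → ℝ) : ℝ := ∫ x : ℝ, ∫ y in Set.Ioi (0 : ℝ), (g x y) ^ 2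

/-- `L²` inner product on the half-plane. -/
def ipL2 (f g : ℝ → ℝ → ℝ) : ℝ := ∫ x : ℝ, ∫ y in Set.Ioi (0 : ℝ), f x y * g x y

/-- Squared `L²ₓL^∞_y` norm on the half-plane. -/
def sqL2xLinfy (g : ℝ → ℝ → ℝ) : ℝ :=
  ∫ x : ℝ, (sSup ((fun y => |g x y|) '' Set.Ioi (0 : ℝ))) ^ 2

/-- The weight `H_{ρ,m,k}`. -/
def Hc (ρ : ℝ) (m k : ℕ) : ℝ :=
  ρ ^ (m + k + 1) * ((m : ℝ) + (k : ℝ) + 1) ^ 9 /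
    (((m + k).factorial : ℝ) * Real.sqrt (m.factorial : ℝ))

/-- The weight `N_{ρ,m} = H_{ρ,m,0}`. -/
def Nc (ρ : ℝ) (m : ℕ) : ℝ := Hc ρ m 0

/-- The weight `L_{ρ,k} = H_{ρ,1,k}`. -/
def Lc (ρ : ℝ) (k : ℕ) : ℝ := Hc ρ 1 k

/-- Squared anisotropic Gevrey norm `‖h‖²_{G^{3/2,1}_{ρ,ℓ}}`. -/
def gevSq (ρ ℓ : ℝ) (h : ℝ → ℝ → ℝ) : ℝ :=
  (∑' m : ℕ, (Nc ρ m * Real.sqrt (sqL2 (wt (ℓ - 1) (Dx m h)))) ^ 2)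
  + ∑' m : ℕ, ∑' k : ℕ,
      (((m : ℝ) + 1) * Hc ρ (m + 1) k *
        Real.sqrt (sqL2 (wt ℓ (Dx m (Dy (k + 1) h))))) ^ 2

/-- Anisotropic Gevrey norm. -/
def gevNorm (ρ ℓ : ℝ) (h : ℝ → ℝ → ℝ) : ℝ := Real.sqrt (gevSq ρ ℓ h)

/-- Membership in the anisotropic Gevrey space `G^{3/2,1}_{ρ,ℓ}`. -/
def InGev (ρ ℓ : ℝ) (h : ℝ → ℝ → ℝ) : Prop :=
  Summable (fun m : ℕ => (Nc ρ m * Real.sqrt (sqL2 (wt (ℓ - 1) (Dx m h)))) ^ 2) ∧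
  Summable (fun p : ℕ × ℕ =>
    (((p.1 : ℝ) + 1) * Hc ρ (p.1 + 1) p.2 *
      Real.sqrt (sqL2 (wt ℓ (Dx p.1 (Dy (p.2 + 1) h))))) ^ 2)

/-- Time derivative `∂ₜ`. -/
def pt (u : ℝ → ℝ → ℝ → ℝ) : ℝ → ℝ → ℝ → ℝ := fun t x y => deriv (fun s => u s x y) t

/-- Tangential derivative `∂ₓ` (time-dependent functions). -/
def px (u : ℝ → ℝ → ℝ → ℝ) : ℝ → ℝ → ℝ → ℝ := fun t x y => deriv (fun x' => u t x' y) x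

/-- Normal derivative `∂_y` (time-dependent functions). -/
def py (u : ℝ → ℝ → ℝ → ℝ) : ℝ → ℝ → ℝ → ℝ := fun t x y => deriv (fun y' => u t x y') y

/-- The normal velocity `v(t,x,y) = -∫₀^y ∂ₓu(t,x,ỹ) dỹ`. -/
def vv (u : ℝ → ℝ → ℝ → ℝ) : ℝ → ℝ → ℝ → ℝ :=
  fun t x y => -∫ s in (0 : ℝ)..y, px u t x s

/-- The auxiliary function `φ = ∂ₜu + u∂ₓu + v∂_yu`. -/
def phi (u : ℝ → ℝ → ℝ → ℝ) : ℝ → ℝ → ℝ → ℝ :=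
  fun t x y => pt u t x y + u t x y * px u t x y + vv u t x y * py u t x y

/-- `u` solves the 2D hyperbolic Prandtl system on `[0,T]`, with the no-slip boundary
condition and decay of `u` at `y → ∞`. -/
def Solves (u : ℝ → ℝ → ℝ → ℝ) (T : ℝ) : Prop :=
  (∀ t ∈ Set.Icc (0 : ℝ) T, ∀ x : ℝ, ∀ y ∈ Set.Ioi (0 : ℝ),
      pt (pt u) t x y + pt u t x y
        + u t x y * px u t x y + vv u t x y * py u t x y
        + pt (fun t' x' y' => u t' x' y' * px u t' x' y' + vv u t' x' y' * py u t' x' y') t x y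
        - py (py u) t x y = 0)
  ∧ (∀ t ∈ Set.Icc (0 : ℝ) T, ∀ x : ℝ, u t x 0 = 0)
  ∧ (∀ t ∈ Set.Icc (0 : ℝ) T, ∀ x : ℝ, Tendsto (fun y => u t x y) atTop (nhds 0))

/-- `U` is the auxiliary function `𝒰` solving
`(∂ₜ + u∂ₓ + v∂_y)∫₀^y 𝒰 dỹ = -∂ₓv`, `𝒰|_{t=0} = 0`. -/
def AuxU (u U : ℝ → ℝ → ℝ → ℝ) (T : ℝ) : Prop :=
  (∀ t ∈ Set.Icc (0 : ℝ) T, ∀ x : ℝ, ∀ y ∈ Set.Ioi (0 : ℝ),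
      pt (fun t' x' y' => ∫ s in (0 : ℝ)..y', U t' x' s) t x y
        + u t x y * px (fun t' x' y' => ∫ s in (0 : ℝ)..y', U t' x' s) t x y
        + vv u t x y * py (fun t' x' y' => ∫ s in (0 : ℝ)..y', U t' x' s) t x y
        = -px (vv u) t x y)
  ∧ (∀ x : ℝ, ∀ y : ℝ, U 0 x y = 0)

/-- The auxiliary function `λ = ∂ₓu - (∂_yu)∫₀^y 𝒰 dỹ`. -/
def lam (u U : ℝ → ℝ → ℝ → ℝ) : ℝ → ℝ → ℝ → ℝ :=
  fun t x y => px u t x y - py u t x y * ∫ s in (0 : ℝ)..y, U t x s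

/-- `|a|²_{X_ρ}` for a time slice `a = (us, Us, ls, fs)` of `(u, 𝒰, λ, φ)`. -/
def Xsq (ρ ℓ : ℝ) (us Us ls fs : ℝ → ℝ → ℝ) : ℝ :=
  (∑' m : ℕ, (Nc ρ (m + 1)) ^ 2 * sqL2 (Dx m Us))
  + (∑' m : ℕ, ((m : ℝ) + 1) * (Nc ρ (m + 1)) ^ 2 * sqL2 (wt (ℓ - 1) (Dx m ls)))
  + ∑' m : ℕ, ∑' k : ℕ, ((m : ℝ) + 1) ^ 2 * (Hc ρ (m + 1) k) ^ 2 *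
      (sqL2 (wt ℓ (Dx m (Dy k fs))) + sqL2 (wt ℓ (Dx m (Dy (k + 1) us))))

/-- `|a|²_{Y_ρ}` for a time slice `a = (us, Us, ls, fs)` of `(u, 𝒰, λ, φ)`. -/
def Ysq (ρ ℓ : ℝ) (us Us ls fs : ℝ → ℝ → ℝ) : ℝ :=
  (∑' m : ℕ, ((m : ℝ) + 1) * (Nc ρ (m + 1)) ^ 2 * sqL2 (Dx m Us))
  + (∑' m : ℕ, ((m : ℝ) + 1) ^ 2 * (Nc ρ (m + 1)) ^ 2 * sqL2 (wt (ℓ - 1) (Dx m ls)))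
  + ∑' m : ℕ, ∑' k : ℕ, ((m : ℝ) + (k : ℝ) + 1) * ((m : ℝ) + 1) ^ 2 * (Hc ρ (m + 1) k) ^ 2 *
      (sqL2 (wt ℓ (Dx m (Dy k fs))) + sqL2 (wt ℓ (Dx m (Dy (k + 1) us))))

/-- `|a|_{X_ρ}`. -/
def Xnorm (ρ ℓ : ℝ) (us Us ls fs : ℝ → ℝ → ℝ) : ℝ := Real.sqrt (Xsq ρ ℓ us Us ls fs)

/-- `|a|_{Y_ρ}`. -/
def Ynorm (ρ ℓ : ℝ) (us Us ls fs : ℝ → ℝ → ℝ) : ℝ := Real.sqrt (Ysq ρ ℓ us Us ls fs)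

end HypP

open HypP

/-! With `q = m - j`, the powers of `ρ` in the quotient cancel down to `ρ⁻⁵ ≤ (e/ρ₀)⁵`, and the
factorials collapse to `(j+1)(q+1)⋯(q+4)/(m+1)` times `√((j+1)! (q+3)! / (m+1)!)`, which is at most
`√((q+1)(q+2)(q+3))` because `(j+1)! q!` divides `(m+1)!`. Since `j > m/2` we have `m+2 ≤ 2(j+2)`, so
the ninth powers contribute at most `(2/(q+5))⁹`, which absorbs all remaining polynomial factors in `q`;
finally `(j+1)/√(m+1) ≤ √(j+1)`. -/

open scoped Nat

theorem Nat.factorial_mul_factorial_add_le (a b k : ℕ) :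
    a ! * (b + k)! ≤ (b + 1).ascFactorial k * (a + b)! := by
  calc a ! * (b + k)! = (b + 1).ascFactorial k * (a ! * b !) := by
        rw [← Nat.factorial_mul_ascFactorial b k]; ring
    _ ≤ (b + 1).ascFactorial k * (a + b)! := Nat.mul_le_mul_left _
        (Nat.le_of_dvd (Nat.factorial_pos _) (Nat.factorial_mul_factorial_dvd_factorial_add a b))

namespace HypP

lemma sqrt_factorial_ratio_le (j q : ℕ) :
    √(((j + 1)! : ℝ) * (q + 3)! / (j + q + 1)!) ≤ √(((q : ℝ) + 1) * (q + 2) * (q + 3)) := by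
  gcongr
  rw [div_le_iff₀ (by positivity)]
  have h := Nat.factorial_mul_factorial_add_le (j + 1) q 3
  rw [show j + 1 + q = j + q + 1 by omega] at h
  simp only [Nat.ascFactorial_succ, Nat.ascFactorial_zero] at h
  exact_mod_cast h.trans_eq (by ring)

lemma weight_ratio_eq {ρ : ℝ} (hρ : ρ ≠ 0) (j q : ℕ) :
    ((j + q)! : ℝ) / (j ! * q !) * √((j : ℝ) + q + 1)
        * (Nc ρ (j + q + 1) / (Nc ρ (j + 1) * Hc ρ (q + 3) 1))
      = (j + 1) * √((j : ℝ) + q + 1) / (j + q + 1)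
        * ((q + 1) * (q + 2) * (q + 3) * (q + 4) * √(((j + 1)! : ℝ) * (q + 3)! / (j + q + 1)!)
          * (((j : ℝ) + q + 2) / ((j + 2) * (q + 5))) ^ 9) * ρ⁻¹ ^ 5 := by
  simp only [Nc, Hc]
  rw [Real.sqrt_div (by positivity), Real.sqrt_mul (by positivity)]
  simp only [Nat.factorial_succ, add_zero]
  push_cast
  field_simp
  ring

lemma mul_sqrt_div_le_sqrt {a b : ℝ} (ha : 0 ≤ a) (hab : a ≤ b) : a * √b / b ≤ √a := by
  rcases ha.eq_or_lt with rfl | ha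
  · simp
  rw [mul_div_assoc, Real.sqrt_div_self', ← div_eq_mul_one_div,
    div_le_iff₀ (Real.sqrt_pos.2 (ha.trans_le hab))]
  calc a = √a * √a := (Real.mul_self_sqrt ha.le).symm
    _ ≤ √a * √b := by gcongr

lemma div_mul_le_two_div {x y : ℝ} (hx : 0 ≤ x) (hy : 0 ≤ y) (h : y ≤ x + 2) :
    (x + y + 2) / ((x + 2) * (y + 5)) ≤ 2 / (y + 5) := by
  rw [div_le_div_iff₀ (by positivity) (by positivity)]
  nlinarith

lemma prod_mul_sqrt_prod_mul_two_div_pow_le {x : ℝ} (hx : 0 ≤ x) :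
    (x + 1) * (x + 2) * (x + 3) * (x + 4) * √((x + 1) * (x + 2) * (x + 3)) * (2 / (x + 5)) ^ 9
      ≤ 2 ^ 9 / (x + 1) := by
  have hsqrt : √((x + 1) * (x + 2) * (x + 3)) ≤ (x + 5) ^ 2 := by
    rw [Real.sqrt_le_left (by positivity)]
    have : (x + 1) * (x + 2) * (x + 3) ≤ (x + 5) * (x + 5) * (x + 5) := by gcongr <;> linarith
    nlinarith
  rw [div_pow, ← mul_div_assoc, div_le_div_iff₀ (by positivity) (by positivity)]
  calc (x + 1) * (x + 2) * (x + 3) * (x + 4) * √((x + 1) * (x + 2) * (x + 3)) * 2 ^ 9 * (x + 1)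
      ≤ (x + 5) * (x + 5) * (x + 5) * (x + 5) * (x + 5) ^ 2 * 2 ^ 9 * (x + 5) := by
        gcongr <;> linarith
    _ = 2 ^ 9 * (x + 5) ^ 7 := by ring
    _ ≤ 2 ^ 9 * (x + 5) ^ 9 := by gcongr <;> linarith

end HypP

/-- estimate (4.19): for `⌊m/2⌋ + 1 ≤ j ≤ m`,
`(m!/(j!(m−j)!)) (m+1)^{1/2} N_{ρ,m+1}/(N_{ρ,j+1}H_{ρ,m−j+3,1}) ≤ C(j+1)^{1/2}/(m−j+1)`. -/
theorem weight_estimate_fe5 (ρ₀ : ℝ) (hρ₀ : 0 < ρ₀) :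
    ∃ C : ℝ, 0 < C ∧
      ∀ ρ : ℝ, (Real.exp 1)⁻¹ * ρ₀ ≤ ρ → ρ ≤ ρ₀ →
        ∀ m j : ℕ, m / 2 + 1 ≤ j → j ≤ m →
          (m.factorial : ℝ) / ((j.factorial : ℝ) * ((m - j).factorial : ℝ))
              * Real.sqrt ((m : ℝ) + 1)
              * (Nc ρ (m + 1) / (Nc ρ (j + 1) * Hc ρ (m - j + 3) 1))
            ≤ C * Real.sqrt ((j : ℝ) + 1) / ((m : ℝ) - (j : ℝ) + 1) := by
  refine ⟨2 ^ 9 * (exp 1 / ρ₀) ^ 5, by positivity, fun ρ hρl _ m j hjm hj => ?_⟩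
  have hρ : 0 < ρ := lt_of_lt_of_le (by positivity) hρl
  have hρinv : ρ⁻¹ ≤ exp 1 / ρ₀ := by
    rw [← inv_div, inv_le_inv₀ hρ (by positivity)]
    simpa [div_eq_inv_mul] using hρl
  obtain ⟨q, rfl⟩ : ∃ q, m = j + q := ⟨m - j, by omega⟩
  have hqj : (q : ℝ) ≤ j + 2 := by exact_mod_cast (by omega : q ≤ j + 2)
  rw [Nat.add_sub_cancel_left]
  push_cast
  rw [weight_ratio_eq hρ.ne']
  calc _ ≤ √((j : ℝ) + 1) * ((q + 1) * (q + 2) * (q + 3) * (q + 4)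
          * √(((q : ℝ) + 1) * (q + 2) * (q + 3)) * (2 / (q + 5)) ^ 9) * (exp 1 / ρ₀) ^ 5 := by
        gcongr ?_ * (_ * ?_ * ?_ ^ 9) * ?_ ^ 5
        · exact mul_sqrt_div_le_sqrt (by positivity) (by linarith [q.cast_nonneg (α := ℝ)])
        · exact sqrt_factorial_ratio_le j q
        · exact div_mul_le_two_div j.cast_nonneg q.cast_nonneg hqj
    _ ≤ √((j : ℝ) + 1) * (2 ^ 9 / (q + 1)) * (exp 1 / ρ₀) ^ 5 := by
        gcongr
        exact prod_mul_sqrt_prod_mul_two_div_pow_le q.cast_nonneg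
    _ = _ := by ring
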